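/- For x ∈ ℝ^d with ρ = ‖x‖ > 0, a homogeneous harmonic polynomial q of degree m, and a non-negative integer j, one has q(∇) ρ^{2j} = [((1/ρ) d/dρ)^m ρ^{2j}] · q(x); in particular ((1/ρ) d/dρ)^m ρ^{2j} = 0 when j < m and equals (2^m j!/(j-m)!) ρ^{2j-2m} when j ≥ m. -/

import Mathlib

open MeasureTheory MvPolynomial Finset Metric Topology Asymptotics Real

noncomputable section

/-- Euclidean space `ℝ^d`. -/
abbrev Ed (d : ℕ) := EuclideanSpace ℝ (Fin d)

/-- Multi-index partial derivative on polynomials. -/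
def mpderiv {d : ℕ} (s : Fin d →₀ ℕ) (p : MvPolynomial (Fin d) ℝ) : MvPolynomial (Fin d) ℝ :=
  ((List.finRange d).map (fun j => (fun q : MvPolynomial (Fin d) ℝ => pderiv j q)^[s j])).foldr
    (fun g h => g ∘ h) id p

/-- The constant-coefficient differential operator `q(∇)` acting on polynomials. -/
def dop {d : ℕ} (q p : MvPolynomial (Fin d) ℝ) : MvPolynomial (Fin d) ℝ :=
  (AddMonoidAlgebra.coeff q).sum fun s c => c • mpderiv s p

/-- The Euclidean Laplacian on polynomials. -/
def lap {d : ℕ} (p : MvPolynomial (Fin d) ℝ) : MvPolynomial (Fin d) ℝ :=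
  ∑ j : Fin d, pderiv j (pderiv j p)

/-- First-order partial derivative `∂/∂x_j` on functions. -/
def pdF {d : ℕ} (j : Fin d) (f : Ed d → ℝ) : Ed d → ℝ :=
  fun x => fderiv ℝ f x (EuclideanSpace.single j 1)

/-- Multi-index partial derivative on functions. -/
def mpdF {d : ℕ} (s : Fin d →₀ ℕ) (f : Ed d → ℝ) : Ed d → ℝ :=
  ((List.finRange d).map (fun j => (pdF j)^[s j])).foldr (fun g h => g ∘ h) id f

/-- The operator `q(∇)` acting on smooth functions. -/
def dopF {d : ℕ} (q : MvPolynomial (Fin d) ℝ) (f : Ed d → ℝ) : Ed d → ℝ :=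
  fun x => (AddMonoidAlgebra.coeff q).sum fun s c => c * mpdF s f x

/-- The Euclidean Laplacian on functions. -/
def lapF {d : ℕ} (f : Ed d → ℝ) : Ed d → ℝ :=
  fun x => ∑ j : Fin d, pdF j (pdF j f) x

/-- The surface measure `σ` on the unit sphere `S^{d-1}`. -/
def sphμ (d : ℕ) : Measure (sphere (0 : Ed d) 1) := (volume : Measure (Ed d)).toSphere

/-- The surface area `ω_d` of the unit sphere `S^{d-1}`. -/
def ωd (d : ℕ) : ℝ := ((sphμ d) Set.univ).toReal

/-- The Pochhammer (shifted factorial) symbol `(a)_k`. -/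
def poch (a : ℝ) (k : ℕ) : ℝ := ∏ i ∈ Finset.range k, (a + i)

/-- Evaluation of a polynomial at a point of `ℝ^d`. -/
def evalE {d : ℕ} (p : MvPolynomial (Fin d) ℝ) (x : Ed d) : ℝ := eval (fun j => x j) p

/-- The polynomial `‖x‖² = x_1² + ⋯ + x_d²`. -/
def nsq (d : ℕ) : MvPolynomial (Fin d) ℝ := ∑ j : Fin d, X j ^ 2

/-- The operator `g ↦ (1/ρ) dg/dρ` on functions of one variable. -/
def rD (g : ℝ → ℝ) : ℝ → ℝ := fun ρ => deriv g ρ / ρ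


/-!
Both sides are polynomial in `x`, so the computation takes place in `MvPolynomial`: `‖x‖^{2j}` is
the polynomial `N^j` with `N = ∑ Xᵢ²`, and `q(∇)` commutes with evaluation. Since `q(∇)` turns
multiplication of `q` by `Xᵢ` into `∂ᵢ`, Euler's identity `(m+1) q = ∑ Xᵢ ∂ᵢq` gives
`(m+1) q(∇) N^j = ∑ᵢ ∂ᵢ ((∂ᵢq)(∇) N^j)`, where each `∂ᵢq` is harmonic and homogeneous of degree
`m`. By induction on `m` and `∑ᵢ ∂ᵢ(N^k ∂ᵢq) = 2km N^{k-1} q + N^k Δq`, this yields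
`q(∇) N^j = 2^m j(j-1)⋯(j-m+1) N^{j-m} q`. The same falling factorial comes out of
`((1/ρ) d/dρ)^m ρ^{2j}`, because `(1/ρ) d/dρ` maps `c ρ^{2k}` to `2kc ρ^{2k-2}`.
-/

namespace MvPolynomial

variable {σ R : Type*} [CommRing R]

theorem pderiv_comm (i j : σ) (p : MvPolynomial σ R) :
    pderiv i (pderiv j p) = pderiv j (pderiv i p) := by
  have h : ⁅pderiv i, pderiv j⁆ = (0 : Derivation R (MvPolynomial σ R) (MvPolynomial σ R)) :=
    derivation_ext fun k => by
      classical
      rw [Derivation.commutator_apply, pderiv_X, pderiv_X]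
      simp [Pi.single_apply, apply_ite]
  simpa [Derivation.commutator_apply, sub_eq_zero] using congr($h p)

end MvPolynomial

section CompIterates

variable {α β ι : Type*}

def compIterates (f : ι → α → α) (s : ι →₀ ℕ) (l : List ι) : α → α :=
  (l.map fun j => (f j)^[s j]).foldr (fun g h => g ∘ h) id

theorem compIterates_cons (f : ι → α → α) (s : ι →₀ ℕ) (a : ι) (l : List ι) :
    compIterates f s (a :: l) = (f a)^[s a] ∘ compIterates f s l := rfl

theorem Function.Semiconj.compIterates {g : α → β} {f : ι → α → α} {f' : ι → β → β}
    (h : ∀ j, Function.Semiconj g (f j) (f' j)) (s : ι →₀ ℕ) (l : List ι) :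
    Function.Semiconj g (compIterates f s l) (compIterates f' s l) := by
  induction l with
  | nil => exact Function.Semiconj.id_right
  | cons a l ih => exact ((h a).iterate_right (s a)).comp_right ih

theorem compIterates_zero (f : ι → α → α) (l : List ι) : compIterates f 0 l = id := by
  induction l with
  | nil => rfl
  | cons a l ih => rw [compIterates_cons, ih]; rfl

theorem compIterates_add {f : ι → α → α} (hf : ∀ i j, Function.Commute (f i) (f j))
    (s t : ι →₀ ℕ) (l : List ι) :
    compIterates f (s + t) l = compIterates f s l ∘ compIterates f t l := by
  induction l with
  | nil => rfl
  | cons a l ih =>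
    have hcomm : Function.Commute ((f a)^[t a]) (compIterates f s l) :=
      Function.Semiconj.compIterates (fun j => (hf a j).iterate_left (t a)) s l
    rw [compIterates_cons, compIterates_cons, compIterates_cons, ih, Finsupp.add_apply,
      Function.iterate_add, Function.comp_assoc, ← Function.comp_assoc _ _ (compIterates f t l),
      hcomm.comp_eq]
    rfl

theorem compIterates_single_one [DecidableEq ι] (f : ι → α → α) (i : ι) (l : List ι) :
    compIterates f (Finsupp.single i 1) l = (f i)^[l.count i] := by
  induction l with
  | nil => rfl
  | cons a l ih =>
    rw [compIterates_cons, ih]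
    rcases eq_or_ne a i with rfl | hai
    · rw [Finsupp.single_eq_same, List.count_cons_self, ← Function.iterate_add, add_comm]
    · rw [Finsupp.single_eq_of_ne hai, List.count_cons_of_ne hai]
      rfl

end CompIterates

section PolynomialOperators

variable {d : ℕ}

theorem mpderiv_eq_compIterates (s : Fin d →₀ ℕ) :
    mpderiv s = compIterates (fun j p => pderiv j p) s (List.finRange d) := rfl

theorem mpderiv_zero (p : MvPolynomial (Fin d) ℝ) : mpderiv 0 p = p := by
  rw [mpderiv_eq_compIterates, compIterates_zero, id]

theorem mpderiv_add (s t : Fin d →₀ ℕ) (p : MvPolynomial (Fin d) ℝ) :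
    mpderiv (s + t) p = mpderiv s (mpderiv t p) := by
  rw [mpderiv_eq_compIterates, compIterates_add (fun i j => pderiv_comm i j)]
  rfl

theorem mpderiv_single_one (i : Fin d) (p : MvPolynomial (Fin d) ℝ) :
    mpderiv (Finsupp.single i 1) p = pderiv i p := by
  rw [mpderiv_eq_compIterates, compIterates_single_one,
    List.count_eq_one_of_mem (List.nodup_finRange d) (List.mem_finRange i)]
  rfl

theorem dop_eq_constr (q p : MvPolynomial (Fin d) ℝ) :
    dop q p = (basisMonomials (Fin d) ℝ).constr ℝ (fun s => mpderiv s p) q := by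
  rw [Module.Basis.constr_apply]
  rfl

theorem dop_add (q r p : MvPolynomial (Fin d) ℝ) : dop (q + r) p = dop q p + dop r p := by
  simp only [dop_eq_constr, map_add]

theorem dop_nsmul (n : ℕ) (q p : MvPolynomial (Fin d) ℝ) : dop (n • q) p = n • dop q p := by
  simp only [dop_eq_constr, map_nsmul]

theorem dop_sum {ι : Type*} (t : Finset ι) (q : ι → MvPolynomial (Fin d) ℝ)
    (p : MvPolynomial (Fin d) ℝ) : dop (∑ i ∈ t, q i) p = ∑ i ∈ t, dop (q i) p := by
  simp only [dop_eq_constr, map_sum]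

theorem dop_monomial (s : Fin d →₀ ℕ) (a : ℝ) (p : MvPolynomial (Fin d) ℝ) :
    dop (monomial s a) p = a • mpderiv s p :=
  sum_monomial_eq (zero_smul ℝ _)

theorem dop_C (a : ℝ) (p : MvPolynomial (Fin d) ℝ) : dop (C a) p = a • p := by
  rw [← monomial_zero', dop_monomial, mpderiv_zero]

theorem dop_X_mul (i : Fin d) (r p : MvPolynomial (Fin d) ℝ) :
    dop (X i * r) p = pderiv i (dop r p) := by
  induction r using MvPolynomial.induction_on' with
  | monomial s a =>
    rw [← pow_one (X i), ← monomial_single_add, dop_monomial, dop_monomial, mpderiv_add,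
      mpderiv_single_one, Derivation.map_smul]
  | add r₁ r₂ h₁ h₂ => rw [mul_add, dop_add, dop_add, h₁, h₂, map_add]

theorem lap_pderiv (i : Fin d) (q : MvPolynomial (Fin d) ℝ) :
    lap (pderiv i q) = pderiv i (lap q) := by
  simp only [lap, map_sum, pderiv_comm _ i]

theorem pderiv_nsq (i : Fin d) : pderiv i (nsq d) = 2 * X i := by
  classical
  simp [nsq, pderiv_X, Pi.single_apply]

end PolynomialOperators

section HarmonicIdentity

variable {d : ℕ}

theorem sum_pderiv_nsq_pow_mul_pderiv {n : ℕ} {q : MvPolynomial (Fin d) ℝ}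
    (hq : q.IsHomogeneous n) (hΔ : lap q = 0) (k : ℕ) :
    ∑ i, pderiv i (nsq d ^ k * pderiv i q) = (2 * k * n) • (nsq d ^ (k - 1) * q) := by
  have hterm : ∀ i, pderiv i (nsq d ^ k) * pderiv i q
      = (2 * k) • (nsq d ^ (k - 1) * (X i * pderiv i q)) := by
    intro i
    rw [pderiv_pow, pderiv_nsq, nsmul_eq_mul]
    push_cast
    ring
  simp only [pderiv_mul, sum_add_distrib, hterm, ← mul_sum, ← smul_sum]
  rw [show ∑ i, pderiv i (pderiv i q) = lap q from rfl, hΔ, mul_zero, add_zero,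
    hq.sum_X_mul_pderiv, mul_smul_comm, smul_smul]

theorem dop_nsq_pow {m : ℕ} {q : MvPolynomial (Fin d) ℝ} (hq : q.IsHomogeneous m)
    (hΔ : lap q = 0) (j : ℕ) :
    dop q (nsq d ^ j) = (2 ^ m * j.descFactorial m) • (nsq d ^ (j - m) * q) := by
  induction m generalizing q with
  | zero =>
    rw [totalDegree_eq_zero_iff_eq_C.mp ((totalDegree_zero_iff_isHomogeneous _).mpr hq), dop_C]
    simp [smul_eq_C_mul, mul_comm]
  | succ m ih =>
    have hΔ' : ∀ i, lap (pderiv i q) = 0 := fun i => by rw [lap_pderiv, hΔ, map_zero]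
    apply IsAddTorsionFree.nsmul_right_injective m.succ_ne_zero
    calc (m + 1) • dop q (nsq d ^ j)
        = ∑ i, pderiv i (dop (pderiv i q) (nsq d ^ j)) := by
          rw [← dop_nsmul, ← hq.sum_X_mul_pderiv, dop_sum]
          simp only [dop_X_mul]
      _ = (2 ^ m * j.descFactorial m) • ∑ i, pderiv i (nsq d ^ (j - m) * pderiv i q) := by
          simp only [ih hq.pderiv (hΔ' _), map_nsmul, smul_sum]
      _ = (m + 1) • (2 ^ (m + 1) * j.descFactorial (m + 1)) • (nsq d ^ (j - (m + 1)) * q) := by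
          rw [sum_pderiv_nsq_pow_mul_pderiv hq hΔ, smul_smul, smul_smul, Nat.descFactorial_succ,
            Nat.sub_sub]
          ring_nf

end HarmonicIdentity

section Evaluation

variable {d : ℕ}

theorem differentiable_evalE (p : MvPolynomial (Fin d) ℝ) : Differentiable ℝ (evalE p) :=
  fun x => (AnalyticOnNhd.eval_continuousLinearMap'
    (fun i => (EuclideanSpace.proj i : Ed d →L[ℝ] ℝ)) p x trivial).differentiableAt

theorem pdF_evalE (j : Fin d) (p : MvPolynomial (Fin d) ℝ) :
    pdF j (evalE p) = evalE (pderiv j p) := by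
  classical
  funext x
  induction p using MvPolynomial.induction_on with
  | C a =>
    have hconst : evalE (C a : MvPolynomial (Fin d) ℝ) = fun _ => a := by funext; simp [evalE]
    simp [pdF, hconst, evalE]
  | add p r hp hr =>
    have hadd : evalE (p + r) = fun y => evalE p y + evalE r y := by funext; simp [evalE]
    simp only [pdF] at hp hr ⊢
    rw [hadd, fderiv_fun_add (differentiable_evalE p x) (differentiable_evalE r x)]
    simp [hp, hr, evalE]
  | mul_X p i hp =>
    have hmul : evalE (p * X i) = fun y => evalE p y * EuclideanSpace.proj i y := by
      funext; simp [evalE]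
    simp only [pdF] at hp ⊢
    rw [hmul, fderiv_fun_mul (differentiable_evalE p x)
      (EuclideanSpace.proj (𝕜 := ℝ) i).differentiableAt, ContinuousLinearMap.fderiv]
    simp [hp, evalE, pderiv_X, Pi.single_apply]
    split_ifs <;> simp

theorem mpdF_evalE (s : Fin d →₀ ℕ) (p : MvPolynomial (Fin d) ℝ) :
    mpdF s (evalE p) = evalE (mpderiv s p) :=
  (Function.Semiconj.compIterates (fun j q => (pdF_evalE j q).symm) s (List.finRange d) p).symm

theorem dopF_evalE (q p : MvPolynomial (Fin d) ℝ) : dopF q (evalE p) = evalE (dop q p) := by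
  funext x
  simp only [dopF, dop, evalE, map_finsuppSum, smul_eval, mpdF_evalE]

theorem evalE_nsq_pow (j : ℕ) : evalE (nsq d ^ j) = fun x => ‖x‖ ^ (2 * j) := by
  funext x
  simp [evalE, nsq, pow_mul, EuclideanSpace.norm_sq_eq]

end Evaluation

section Radial

theorem rD_congr {f g : ℝ → ℝ} {U : Set ℝ} (hU : IsOpen U) (h : Set.EqOn f g U) :
    Set.EqOn (rD f) (rD g) U := fun ρ hρ => by
  simp only [rD, (h.eventuallyEq_of_mem (hU.mem_nhds hρ)).deriv_eq]

theorem rD_const_mul_pow_two_mul (c : ℝ) (k : ℕ) {ρ : ℝ} (hρ : ρ ≠ 0) :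
    rD (fun t => c * t ^ (2 * k)) ρ = c * (2 * k) * ρ ^ (2 * (k - 1)) := by
  rw [rD, deriv_const_mul_field, deriv_pow_field]
  rcases k with _ | k
  · simp
  · rw [show 2 * (k + 1) - 1 = 2 * k + 1 by omega, pow_succ]
    field_simp
    push_cast
    ring

theorem iterate_rD_pow_two_mul (m j : ℕ) :
    Set.EqOn (rD^[m] fun t => t ^ (2 * j))
      (fun t => ((2 ^ m * j.descFactorial m : ℕ) : ℝ) * t ^ (2 * (j - m))) {0}ᶜ := by
  induction m with
  | zero => intro ρ _; simp
  | succ m ih =>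
    intro ρ hρ
    rw [Function.iterate_succ_apply', rD_congr isOpen_compl_singleton ih hρ,
      rD_const_mul_pow_two_mul _ _ hρ, Nat.descFactorial_succ, Nat.sub_sub]
    push_cast
    ring

end Radial

/-- `q(∇) ρ^{2j} = [((1/ρ) d/dρ)^m ρ^{2j}] q(x)`, with explicit values of the
iterated radial operator. -/
theorem stmt15 (d m j : ℕ) (q : MvPolynomial (Fin d) ℝ)
    (hqhom : q.IsHomogeneous m) (hqharm : lap q = 0) :
    (∀ x : Ed d, x ≠ 0 →
      dopF q (fun x : Ed d => ‖x‖ ^ (2 * j)) x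
        = (rD^[m] (fun ρ : ℝ => ρ ^ (2 * j))) ‖x‖ * evalE q x) ∧
    (j < m → ∀ ρ : ℝ, 0 < ρ → (rD^[m] (fun ρ : ℝ => ρ ^ (2 * j))) ρ = 0) ∧
    (m ≤ j → ∀ ρ : ℝ, 0 < ρ →
      (rD^[m] (fun ρ : ℝ => ρ ^ (2 * j))) ρ
        = (2 ^ m * (j.factorial : ℝ) / ((j - m).factorial : ℝ)) * ρ ^ (2 * j - 2 * m)) := by
  have hrad := iterate_rD_pow_two_mul m j
  refine ⟨fun x hx => ?_, fun hjm ρ hρ => ?_, fun hmj ρ hρ => ?_⟩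
  · rw [← evalE_nsq_pow, dopF_evalE, dop_nsq_pow hqhom hqharm,
      hrad (norm_ne_zero_iff.mpr hx : ‖x‖ ≠ 0)]
    dsimp only
    rw [← congrFun (evalE_nsq_pow (j - m)) x]
    simp only [evalE, nsmul_eq_mul, map_mul, map_natCast]
    ring
  · rw [hrad hρ.ne', Nat.descFactorial_eq_zero_iff_lt.mpr hjm]
    simp
  · rw [hrad hρ.ne', ← Nat.factorial_mul_descFactorial hmj, Nat.mul_sub]
    field_simp
    push_cast
    ring
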